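/- Let T = T[1..n] be a string over a totally ordered alphabet whose last symbol T[n] occurs only at position n and is strictly smaller than every other symbol of T, and let ISA be its inverse suffix array. For every i with 1 ≤ i < n and every ℓ with 1 ≤ ℓ ≤ n − i, LA[i] = ℓ if and only if ISA[i] < ISA[i+k] for all k with 1 ≤ k < ℓ and, in case i + ℓ ≤ n, ISA[i] > ISA[i+ℓ]. -/
import Mathlib


variable {α : Type*}

/-- A string is primitive if it is not a repetition `S^k` with `k > 1`. -/
def IsPrimitive (T : List α) : Prop :=
  ¬ ∃ (S : List α) (k : ℕ), 1 < k ∧ T = (List.replicate k S).flatten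

/-- A string is a Lyndon word if it is primitive and lexicographically strictly
smaller than each of its nontrivial rotations. -/
def IsLyndon [LinearOrder α] (T : List α) : Prop :=
  IsPrimitive T ∧ ∀ i, 0 < i → i < T.length → T < T.rotate i

/-- `lyndonArray T i` (positions are 1-based) is the length of the longest Lyndon
factor of `T` starting at position `i`. -/
noncomputable def lyndonArray [LinearOrder α] (T : List α) (i : ℕ) : ℕ :=
  sSup {ℓ | ℓ ≤ T.length - (i - 1) ∧ IsLyndon ((T.drop (i - 1)).take ℓ)}

/-- The last symbol of `T` is strictly smaller than the symbol at every other
position (in particular it occurs only at the last position). -/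
def Sentinel [LinearOrder α] (T : List α) : Prop :=
  ∀ (i : ℕ) (h : i + 1 < T.length), T[T.length - 1]'(by omega) < T[i]'(by omega)

/-- The suffix `T_i` (1-based) is L-type if `i < n` and `T_i > T_{i+1}`. -/
def LType [LinearOrder α] (T : List α) (i : ℕ) : Prop :=
  i < T.length ∧ T.drop i < T.drop (i - 1)

/-- The suffix `T_i` (1-based) is S-type if `T_i < T_{i+1}`, or `i = n`. -/
def SType [LinearOrder α] (T : List α) (i : ℕ) : Prop :=
  i = T.length ∨ T.drop (i - 1) < T.drop i

/-- Position `i` (1-based, `2 ≤ i ≤ n`) is LMS-type if `T_i` is S-type and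
`T_{i-1}` is L-type. -/
def LMSType [LinearOrder α] (T : List α) (i : ℕ) : Prop :=
  2 ≤ i ∧ i ≤ T.length ∧ SType T i ∧ LType T (i - 1)

section Aux
variable [LinearOrder α]

private lemma consLt {a b : α} {l₁ l₂ : List α} :
    a :: l₁ < b :: l₂ ↔ a < b ∨ (a = b ∧ l₁ < l₂) := by
  constructor
  · intro h
    have h' : List.Lex (· < ·) (a :: l₁) (b :: l₂) := h
    cases h' with
    | cons h => exact Or.inr ⟨rfl, h⟩
    | rel h => exact Or.inl h
  · rintro (h | ⟨rfl, h⟩)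
    · exact List.Lex.rel h
    · exact List.Lex.cons h

private lemma key : ∀ (A B Z W : List α), ¬ A <+: B → ¬ B <+: A →
    (A ++ Z < B ++ W ↔ A < B)
  | [], B, _, _, hAB, _ => absurd (List.nil_prefix) hAB
  | (_ :: _), [], _, _, _, hBA => absurd List.nil_prefix hBA
  | (a :: A'), (b :: B'), Z, W, hAB, hBA => by
    rcases eq_or_ne a b with rfl | hne
    · have h1 : ¬ A' <+: B' := fun h => hAB (List.cons_prefix_cons.mpr ⟨rfl, h⟩)
      have h2 : ¬ B' <+: A' := fun h => hBA (List.cons_prefix_cons.mpr ⟨rfl, h⟩)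
      simp only [List.cons_append, consLt, key A' B' Z W h1 h2, lt_irrefl, false_or,
        true_and]
    · simp only [List.cons_append, consLt]
      constructor
      · rintro (h | ⟨rfl, h⟩)
        · exact Or.inl h
        · exact absurd rfl hne
      · rintro (h | ⟨rfl, h⟩)
        · exact Or.inl h
        · exact absurd rfl hne

private lemma strip : ∀ (A Z W : List α), (A ++ Z < A ++ W ↔ Z < W)
  | [], _, _ => Iff.rfl
  | a :: A', Z, W => by
    simp only [List.cons_append, consLt, lt_irrefl, false_or, true_and, strip A' Z W]

end Aux

private lemma take_drop_append (T : List α) (p m : ℕ) :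
    (T.drop p).take m ++ T.drop (p + m) = T.drop p := by
  conv_rhs => rw [← List.take_append_drop m (T.drop p)]
  rw [List.drop_drop]

private lemma drop_take_drop (T : List α) (p m j : ℕ) (hj : j ≤ m) :
    ((T.drop p).take m).drop j ++ T.drop (p + m) = T.drop (p + j) := by
  rw [List.drop_take, List.drop_drop]
  have h : p + m = (p + j) + (m - j) := by omega
  rw [h]
  exact take_drop_append T (p + j) (m - j)

private lemma rotate_flatten_replicate (S : List α) (k : ℕ) (hk : 0 < k) :
    ((List.replicate k S).flatten).rotate S.length = (List.replicate k S).flatten := by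
  obtain ⟨k', rfl⟩ : ∃ k', k = k' + 1 := ⟨k - 1, by omega⟩
  rw [List.replicate_succ, List.flatten_cons]
  rw [List.rotate_eq_drop_append_take (by simp), List.drop_left, List.take_left]
  have h2 : (List.replicate k' S).flatten ++ S = (List.replicate (k' + 1) S).flatten := by
    rw [List.replicate_succ', List.flatten_append]; simp
  rw [h2, List.replicate_succ, List.flatten_cons]

private lemma length_flatten_replicate (S : List α) (k : ℕ) :
    ((List.replicate k S).flatten).length = k * S.length := by
  rw [List.length_flatten, List.map_replicate, List.sum_replicate, smul_eq_mul]

section Main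
variable [LinearOrder α]

private lemma main_rot (T : List α) (p m : ℕ) (hpm : p + m ≤ T.length)
    (hlt : ∀ k, 0 < k → k < m → T.drop p < T.drop (p + k))
    (hsm : T.drop (p + m) < T.drop p) :
    ∀ j, 0 < j → j < m → (T.drop p).take m < ((T.drop p).take m).rotate j := by
  intro j hj hjm
  set F := (T.drop p).take m with hFdef
  have hFlen : F.length = m := by
    simp [hFdef, List.length_take, List.length_drop]; omega
  set G := F.drop j with hGdef
  set Z := T.drop (p + m) with hZdef
  have hFZ : F ++ Z = T.drop p := take_drop_append T p m
  have hGZ : G ++ Z = T.drop (p + j) := drop_take_drop T p m j (by omega)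
  have hj' : F ++ Z < G ++ Z := by rw [hFZ, hGZ]; exact hlt j hj hjm
  have hnFG : ¬ F <+: G := by
    intro h
    have := h.length_le
    rw [hFlen, hGdef, List.length_drop, hFlen] at this
    omega
  have hnGF : ¬ G <+: F := by
    intro h
    have hGlen : G.length = m - j := by rw [hGdef, List.length_drop, hFlen]
    have hFeq : F = G ++ F.drop (m - j) := by
      conv_lhs => rw [← List.take_append_drop (m - j) F]
      rw [List.prefix_iff_eq_take.mp h, hGlen]
    have hD : F.drop (m - j) ++ Z = T.drop (p + (m - j)) :=
      drop_take_drop T p m (m - j) (by omega)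
    have hlt1 : T.drop (p + (m - j)) < Z := by
      rw [← hD]
      refine (strip G _ _).mp ?_
      have heq2 : F ++ Z = G ++ (F.drop (m - j) ++ Z) := by
        rw [← List.append_assoc, ← hFeq]
      rw [← heq2]
      exact hj'
    have hlt2 : T.drop p < T.drop (p + (m - j)) := hlt (m - j) (by omega) (by omega)
    exact absurd (hlt1.trans (hsm.trans hlt2)) (lt_irrefl _)
  have hFG : F < G := (key F G Z Z hnFG hnGF).mp hj'
  rw [List.rotate_eq_drop_append_take (by omega : j ≤ F.length)]
  have := (key F G [] (F.take j) hnFG hnGF).mpr hFG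
  rwa [List.append_nil] at this

private lemma main (T : List α) (p m : ℕ) (hm : 0 < m) (hpm : p + m ≤ T.length)
    (hlt : ∀ k, 0 < k → k < m → T.drop p < T.drop (p + k))
    (hsm : T.drop (p + m) < T.drop p) :
    IsLyndon ((T.drop p).take m) := by
  have hrot := main_rot T p m hpm hlt hsm
  have hFlen : ((T.drop p).take m).length = m := by
    simp [List.length_take, List.length_drop]; omega
  constructor
  · rintro ⟨S, k, hk, hEq⟩
    have hlen : m = k * S.length := by
      rw [← hFlen, hEq, length_flatten_replicate]
    have hS : 0 < S.length := by
      rcases Nat.eq_zero_or_pos S.length with h | h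
      · rw [h, mul_zero] at hlen; omega
      · exact h
    have hSm : S.length < m := by nlinarith
    have h1 := hrot S.length hS hSm
    rw [hEq, rotate_flatten_replicate S k (by omega)] at h1
    exact absurd h1 (lt_irrefl _)
  · intro j hj hjlen
    exact hrot j hj (by omega)

private lemma lyndon_suffix {F : List α} (hF : IsLyndon F) {k : ℕ} (hk : 0 < k)
    (hkF : k < F.length) : ¬ (F.drop k <+: F) ∧ F < F.drop k := by
  set L := F.length with hLdef
  have hvlen : (F.drop k).length = L - k := by rw [List.length_drop]
  have hnb : ¬ (F.drop k <+: F) := by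
    intro hpre
    set v := F.drop k with hvdef
    set u := F.take k with hudef
    set w := F.drop (L - k) with hwdef
    have hwlen : w.length = k := by rw [hwdef, List.length_drop]; omega
    have hulen : u.length = k := by rw [hudef, List.length_take]; omega
    have hFvw : F = v ++ w := by
      conv_lhs => rw [← List.take_append_drop (L - k) F]
      rw [List.prefix_iff_eq_take.mp hpre, hvlen]
    have hFuv : F = u ++ v := (List.take_append_drop k F).symm
    have rot1 : F < v ++ u := by
      have := hF.2 k hk hkF
      rwa [List.rotate_eq_drop_append_take (by omega : k ≤ F.length)] at this
    have hwu : w < u := by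
      rw [hFvw] at rot1
      exact (strip v w u).mp rot1
    have rot2 : F < w ++ F.take (L - k) := by
      have := hF.2 (L - k) (by omega) (by omega)
      rwa [List.rotate_eq_drop_append_take (by omega : L - k ≤ F.length)] at this
    have hnwu : ¬ w <+: u := by
      intro h
      have := h.eq_of_length (by omega)
      rw [this] at hwu
      exact absurd hwu (lt_irrefl _)
    have hnuw : ¬ u <+: w := by
      intro h
      have := h.eq_of_length (by omega)
      rw [this] at hwu
      exact absurd hwu (lt_irrefl _)
    have h3 : w ++ F.take (L - k) < u ++ v := (key w u _ _ hnwu hnuw).mpr hwu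
    rw [← hFuv] at h3
    exact absurd (rot2.trans h3) (lt_irrefl _)
  refine ⟨hnb, ?_⟩
  have hnFv : ¬ F <+: F.drop k := by
    intro h
    have := h.length_le
    omega
  have rot1 : F < F.drop k ++ F.take k := by
    have := hF.2 k hk hkF
    rwa [List.rotate_eq_drop_append_take (by omega : k ≤ F.length)] at this
  have := (key F (F.drop k) [] (F.take k) hnFv hnb).mp (by rwa [List.append_nil])
  exact this

end Main

section Final
variable [LinearOrder α]

private lemma la_eq (T : List α) (i ℓ : ℕ) (hi1 : 1 ≤ i) (hin : i < T.length)
    (hl1 : 1 ≤ ℓ) (hln : ℓ ≤ T.length - i)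
    (h1 : ∀ k, 0 < k → k < ℓ → T.drop (i - 1) < T.drop (i - 1 + k))
    (h2 : T.drop (i - 1 + ℓ) < T.drop (i - 1)) :
    lyndonArray T i = ℓ := by
  unfold lyndonArray
  apply IsGreatest.csSup_eq
  constructor
  · exact ⟨by omega, main T (i - 1) ℓ (by omega) (by omega) h1 h2⟩
  · intro ℓ' hmem
    obtain ⟨hle, hLy⟩ := hmem
    by_contra hcon
    push_neg at hcon
    have hF'len : ((T.drop (i - 1)).take ℓ').length = ℓ' := by
      simp [List.length_take, List.length_drop]; omega
    obtain ⟨hnb, hlt'⟩ := lyndon_suffix hLy (show 0 < ℓ by omega)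
      (by rw [hF'len]; omega)
    have hnFv : ¬ ((T.drop (i - 1)).take ℓ') <+: ((T.drop (i - 1)).take ℓ').drop ℓ := by
      intro h
      have := h.length_le
      rw [hF'len, List.length_drop, hF'len] at this
      omega
    have h3 := (key _ _ (T.drop (i - 1 + ℓ')) (T.drop (i - 1 + ℓ')) hnFv hnb).mpr hlt'
    rw [take_drop_append T (i - 1) ℓ', drop_take_drop T (i - 1) ℓ' ℓ (by omega)] at h3
    exact absurd (h2.trans h3) (lt_irrefl _)

private lemma exists_m (T : List α) (hsent : Sentinel T)
    (i : ℕ) (hi1 : 1 ≤ i) (hin : i < T.length) :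
    ∃ m, 1 ≤ m ∧ m ≤ T.length - i ∧
      (∀ k, 0 < k → k < m → T.drop (i - 1) < T.drop (i - 1 + k)) ∧
      T.drop (i - 1 + m) < T.drop (i - 1) := by
  have hmem : (T.length - i) ∈
      {k | 1 ≤ k ∧ k ≤ T.length - i ∧ T.drop (i - 1 + k) < T.drop (i - 1)} := by
    refine ⟨by omega, le_refl _, ?_⟩
    have e1 : i - 1 + (T.length - i) = T.length - 1 := by omega
    rw [e1]
    have hlast : T.drop (T.length - 1) = [T[T.length - 1]'(by omega)] := by
      rw [List.drop_eq_getElem_cons (by omega)]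
      congr 1
      exact List.drop_eq_nil_of_le (by omega)
    have e2 : i - 1 + 1 = i := by omega
    have hcur : T.drop (i - 1) = T[i - 1]'(by omega) :: T.drop i := by
      rw [List.drop_eq_getElem_cons (by omega)]
      congr 1
      rw [e2]
    rw [hlast, hcur]
    exact List.Lex.rel (hsent (i - 1) (by omega))
  have hKne :
      Set.Nonempty {k | 1 ≤ k ∧ k ≤ T.length - i ∧ T.drop (i - 1 + k) < T.drop (i - 1)} :=
    ⟨_, hmem⟩
  have hsInf := Nat.sInf_mem hKne
  simp only [Set.mem_setOf_eq] at hsInf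
  obtain ⟨hm1, hm2, hm3⟩ := hsInf
  refine ⟨_, hm1, hm2, ?_, hm3⟩
  intro k hk hkm
  have hnot := Nat.notMem_of_lt_sInf hkm
  simp only [Set.mem_setOf_eq] at hnot
  have hnlt : ¬ T.drop (i - 1 + k) < T.drop (i - 1) := fun h => hnot ⟨hk, by omega, h⟩
  have hne : T.drop (i - 1) ≠ T.drop (i - 1 + k) := by
    intro h
    have := congrArg List.length h
    rw [List.length_drop, List.length_drop] at this
    omega
  exact lt_of_le_of_ne (le_of_not_gt hnlt) hne

end Final

/-- In terms of the inverse suffix array, for `1 ≤ i < n` and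
`1 ≤ ℓ ≤ n - i`: `LA[i] = ℓ` iff `ISA[i] < ISA[i+k]` for all `1 ≤ k < ℓ` and,
in case `i + ℓ ≤ n`, `ISA[i] > ISA[i+ℓ]`. -/
theorem stmt1 [LinearOrder α] (T : List α) (n : ℕ) (hn : T.length = n)
    (hsent : Sentinel T) (ISA : ℕ → ℕ)
    (hrange : ∀ i, 1 ≤ i → i ≤ n → 1 ≤ ISA i ∧ ISA i ≤ n)
    (hISA : ∀ i j, 1 ≤ i → i ≤ n → 1 ≤ j → j ≤ n →
      (ISA i < ISA j ↔ T.drop (i - 1) < T.drop (j - 1)))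
    (i ℓ : ℕ) (hi1 : 1 ≤ i) (hin : i < n) (hl1 : 1 ≤ ℓ) (hln : ℓ ≤ n - i) :
    lyndonArray T i = ℓ ↔
      ((∀ k, 1 ≤ k → k < ℓ → ISA i < ISA (i + k)) ∧
        (i + ℓ ≤ n → ISA (i + ℓ) < ISA i)) := by
  subst hn
  have hiN : i ≤ T.length := le_of_lt hin
  have hiℓ : i + ℓ ≤ T.length := by omega
  constructor
  · intro hLA
    obtain ⟨m, hm1, hm2, hm3, hm4⟩ := exists_m T hsent i hi1 hin
    have hLAm := la_eq T i m hi1 hin hm1 hm2 hm3 hm4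
    rw [hLA] at hLAm
    subst hLAm
    refine ⟨?_, ?_⟩
    · intro k hk hkℓ
      rw [hISA i (i + k) hi1 hiN (by omega) (by omega)]
      have e : i + k - 1 = i - 1 + k := by omega
      rw [e]
      exact hm3 k (by omega) hkℓ
    · intro _
      rw [hISA (i + ℓ) i (by omega) (by omega) hi1 hiN]
      have e : i + ℓ - 1 = i - 1 + ℓ := by omega
      rw [e]
      exact hm4
  · rintro ⟨hA, hB⟩
    have hB' := hB hiℓ
    rw [hISA (i + ℓ) i (by omega) (by omega) hi1 hiN] at hB'
    have e : i + ℓ - 1 = i - 1 + ℓ := by omega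
    rw [e] at hB'
    apply la_eq T i ℓ hi1 hin hl1 hln ?_ hB'
    intro k hk hkℓ
    have hk' := hA k (by omega) hkℓ
    rw [hISA i (i + k) hi1 hiN (by omega) (by omega)] at hk'
    have e2 : i + k - 1 = i - 1 + k := by omega
    rwa [e2] at hk'
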